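/- arXiv:2405.07254 — 6 statements merged into one kernel-verified Lean document; each statement's English description precedes it below -/
import Mathlib

section
/- For every matrix X ∈ Mat(n,K), every k with 1 ≤ k ≤ n, and all upper unitriangular matrices u, v ∈ UT(n), one has D_k(uXv) = D_k(X); in other words, each left lower corner minor D_k is invariant under left and right multiplication by upper unitriangular matrices. -/
open Matrix

/-- Entry of an `n × n` matrix in 1-based indexing; `0` outside the range `[1,n]²`. -/
def ent {R : Type*} [Zero R] {n : ℕ} (X : Matrix (Fin n) (Fin n) R) (a b : ℕ) : R :=
  if h : 1 ≤ a ∧ a ≤ n ∧ 1 ≤ b ∧ b ≤ n then X ⟨a - 1, by omega⟩ ⟨b - 1, by omega⟩ else 0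

/-- `Dmin k X`: the left lower corner minor of order `n - k + 1`;
rows `k,…,n`, columns `1,…,n-k+1` (1-based). -/
noncomputable def Dmin {R : Type*} [CommRing R] {n : ℕ} (k : ℕ)
    (X : Matrix (Fin n) (Fin n) R) : R :=
  (Matrix.of fun r c : Fin (n + 1 - k) => ent X (k + r.val) (1 + c.val)).det

/-- `Mmin i j X`: minor of order `n - i + 1` with rows `i,…,n` and
columns `1,…,n-i` together with column `j` (1-based). -/
noncomputable def Mmin {R : Type*} [CommRing R] {n : ℕ} (i j : ℕ)
    (X : Matrix (Fin n) (Fin n) R) : R :=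
  (Matrix.of fun r c : Fin (n + 1 - i) =>
    ent X (i + r.val) (if c.val < n - i then 1 + c.val else j)).det

/-- `Nmin j k Y`: minor of order `n - k + 1` with rows `{j} ∪ {k+1,…,n}` and
columns `1,…,n-k+1` (1-based). -/
noncomputable def Nmin {R : Type*} [CommRing R] {n : ℕ} (j k : ℕ)
    (Y : Matrix (Fin n) (Fin n) R) : R :=
  (Matrix.of fun r c : Fin (n + 1 - k) =>
    ent Y (if r.val = 0 then j else k + r.val) (1 + c.val)).det

/-- `Pmin i k X Y = Σ_{j=i'}^{k} M_{ij}(X) N_{jk}(Y)`, where `i' = n - i + 1`. -/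
noncomputable def Pmin {R : Type*} [CommRing R] {n : ℕ} (i k : ℕ)
    (X Y : Matrix (Fin n) (Fin n) R) : R :=
  ∑ j ∈ Finset.Icc (n + 1 - i) k, Mmin i j X * Nmin j k Y

/-- `Rminus i k X Y`: determinant of the `k × k` matrix whose first `n - i + 1` rows are
rows `i,…,n` of `X` restricted to columns `1,…,k`, and whose remaining rows are the last
`k - (n - i + 1)` rows of `Y` restricted to columns `1,…,k`. -/
noncomputable def Rminus {R : Type*} [CommRing R] {n : ℕ} (i k : ℕ)
    (X Y : Matrix (Fin n) (Fin n) R) : R :=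
  (Matrix.of fun r c : Fin k =>
    if r.val < n + 1 - i then ent X (i + r.val) (1 + c.val)
    else ent Y (n - k + 1 + r.val) (1 + c.val)).det

/-- `Rplus i k Z X`: determinant of the `(n-i+1) × (n-i+1)` matrix whose first
`(n-i+1) - k` columns are columns `1,…,(n-i+1)-k` of `Z` restricted to rows `i,…,n`,
and whose last `k` columns are columns `1,…,k` of `X` restricted to rows `i,…,n`. -/
noncomputable def Rplus {R : Type*} [CommRing R] {n : ℕ} (i k : ℕ)
    (Z X : Matrix (Fin n) (Fin n) R) : R :=
  (Matrix.of fun r c : Fin (n + 1 - i) =>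
    if c.val < n + 1 - i - k then ent Z (i + r.val) (1 + c.val)
    else ent X (i + r.val) (c.val - (n + 1 - i - k) + 1)).det

/-- Square minor of order `m` with rows `r₀, r₀+1, …` and columns `c₀, c₀+1, …` (1-based). -/
noncomputable def RectMinor {R : Type*} [CommRing R] {n : ℕ} (r₀ c₀ m : ℕ)
    (X : Matrix (Fin n) (Fin n) R) : R :=
  (Matrix.of fun r c : Fin m => ent X (r₀ + r.val) (c₀ + c.val)).det

/-- `u` is upper triangular with ones on the diagonal. -/
def IsUT {R : Type*} [CommRing R] {n : ℕ} (u : Matrix (Fin n) (Fin n) R) : Prop :=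
  (∀ i, u i i = 1) ∧ ∀ i j : Fin n, (j : ℕ) < (i : ℕ) → u i j = 0

/-- Anti-diagonal matrix: entries off the anti-diagonal vanish (0-based: `a + b = n - 1`). -/
def AntiDiag {R : Type*} [Zero R] {n : ℕ} (X : Matrix (Fin n) (Fin n) R) : Prop :=
  ∀ a b : Fin n, (a : ℕ) + (b : ℕ) ≠ n - 1 → X a b = 0

/-- Lower anti-triangular: entries above the anti-diagonal vanish. -/
def LowerAnti {R : Type*} [Zero R] {n : ℕ} (X : Matrix (Fin n) (Fin n) R) : Prop :=
  ∀ a b : Fin n, (a : ℕ) + (b : ℕ) < n - 1 → X a b = 0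

/-- Upper anti-triangular: entries below the anti-diagonal vanish. -/
def UpperAnti {R : Type*} [Zero R] {n : ℕ} (X : Matrix (Fin n) (Fin n) R) : Prop :=
  ∀ a b : Fin n, n - 1 < (a : ℕ) + (b : ℕ) → X a b = 0

/-! Restricting `u * X * v` to the rows `k, …, n` and the columns `1, …, n - k + 1` involves only
the same rows and columns of `u` and `v`, because `u` is upper triangular and the rows form a
final segment, while `v` is upper triangular and the columns form an initial segment. Hence the
corner submatrix of `u * X * v` is the corresponding corner of `X` multiplied by two unitriangular
matrices, which have determinant one. -/

namespace Matrix

theorem submatrix_mul_of_injective {α l m n o p q : Type*} [Fintype n] [Fintype o] [Mul α]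
    [AddCommMonoid α] (M : Matrix m n α) (N : Matrix n p α) (e₁ : l → m) (e₂ : o → n)
    (e₃ : q → p) (he₂ : Function.Injective e₂)
    (h : ∀ i j c, j ∉ Set.range e₂ → M (e₁ i) j * N j (e₃ c) = 0) :
    (M * N).submatrix e₁ e₃ = M.submatrix e₁ e₂ * N.submatrix e₂ e₃ :=
  ext fun i c =>
    (Fintype.sum_of_injective e₂ he₂ _ _ (fun j hj => h i j c hj) fun _ => rfl).symm

end Matrix

def Fin.tailEmb (a : ℕ) {m n : ℕ} (h : a + m = n) : Fin m → Fin n :=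
  fun r => ⟨a + r, h ▸ Nat.add_lt_add_left r.isLt a⟩

theorem Fin.strictMono_tailEmb (a : ℕ) {m n : ℕ} (h : a + m = n) :
    StrictMono (Fin.tailEmb a h) :=
  fun _ _ hrs => Nat.add_lt_add_left hrs a

theorem Fin.lt_of_notMem_range_tailEmb {a m n : ℕ} {h : a + m = n} {j : Fin n}
    (hj : j ∉ Set.range (Fin.tailEmb a h)) : (j : ℕ) < a := by
  by_contra! hge
  exact hj ⟨⟨j - a, by omega⟩, Fin.ext (by simp [Fin.tailEmb]; omega)⟩

theorem Fin.le_of_notMem_range_castLE {m n : ℕ} {h : m ≤ n} {j : Fin n}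
    (hj : j ∉ Set.range (Fin.castLE h)) : m ≤ (j : ℕ) := by
  by_contra! hlt
  exact hj ⟨⟨j, hlt⟩, rfl⟩

namespace IsUT

variable {R : Type*} [CommRing R] {n : ℕ} {u : Matrix (Fin n) (Fin n) R}

theorem det_submatrix (hu : IsUT u) {m : ℕ} {e : Fin m → Fin n} (he : StrictMono e) :
    (u.submatrix e e).det = 1 := by
  rw [Matrix.det_of_isUpperTriangular (M := u.submatrix e e) fun _ _ hji => hu.2 _ _ (he hji)]
  simp [hu.1]

theorem mul_submatrix_tailEmb (hu : IsUT u) {ι κ : Type*} (X : Matrix (Fin n) ι R) {a m : ℕ}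
    (h : a + m = n) (e : κ → ι) :
    (u * X).submatrix (Fin.tailEmb a h) e =
      u.submatrix (Fin.tailEmb a h) (Fin.tailEmb a h) * X.submatrix (Fin.tailEmb a h) e :=
  Matrix.submatrix_mul_of_injective _ _ _ _ _ (Fin.strictMono_tailEmb a h).injective
    fun i _ _ hj => by
      rw [hu.2 _ _ ((Fin.lt_of_notMem_range_tailEmb hj).trans_le (Nat.le_add_right a i)),
        zero_mul]

theorem submatrix_castLE_mul (hu : IsUT u) {ι κ : Type*} (X : Matrix ι (Fin n) R) {m : ℕ}
    (h : m ≤ n) (e : κ → ι) :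
    (X * u).submatrix e (Fin.castLE h) =
      X.submatrix e (Fin.castLE h) * u.submatrix (Fin.castLE h) (Fin.castLE h) :=
  Matrix.submatrix_mul_of_injective _ _ _ _ _ (Fin.strictMono_castLE h).injective
    fun _ _ c hj => by
      rw [hu.2 _ _ (c.isLt.trans_le (Fin.le_of_notMem_range_castLE hj)), mul_zero]

end IsUT

theorem Dmin_eq_det_submatrix {R : Type*} [CommRing R] {n k : ℕ} (hk1 : 1 ≤ k)
    (hk2 : k ≤ n + 1) (X : Matrix (Fin n) (Fin n) R) :
    Dmin k X = (X.submatrix (Fin.tailEmb (k - 1) (by omega : k - 1 + (n + 1 - k) = n))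
      (Fin.castLE (by omega : n + 1 - k ≤ n))).det := by
  unfold Dmin
  congr 1
  ext r c
  have hr := r.isLt
  have hc := c.isLt
  rw [Matrix.of_apply, ent, dif_pos (by omega)]
  congr 1 <;> ext
  · simp only [Fin.tailEmb]; omega
  · simp only [Fin.val_castLE]; omega

theorem Dmin_mul_unitriangular_left_right_general {K : Type*} [Field K] {n : ℕ}
    (X u v : Matrix (Fin n) (Fin n) K) (hu : IsUT u) (hv : IsUT v)
    (k : ℕ) (hk1 : 1 ≤ k) (hk2 : k ≤ n) :
    Dmin k (u * X * v) = Dmin k X := by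
  have hsplit : k - 1 + (n + 1 - k) = n := by omega
  have hle : n + 1 - k ≤ n := by omega
  rw [Dmin_eq_det_submatrix hk1 (by omega), Dmin_eq_det_submatrix hk1 (by omega),
    hv.submatrix_castLE_mul _ hle, hu.mul_submatrix_tailEmb _ hsplit, Matrix.det_mul,
    Matrix.det_mul, hu.det_submatrix (Fin.strictMono_tailEmb _ hsplit),
    hv.det_submatrix (Fin.strictMono_castLE hle), one_mul, mul_one]

/-- each left lower corner minor `D_k` is invariant under left and right
multiplication by upper unitriangular matrices. -/
theorem Dmin_mul_unitriangular_left_right {K : Type*} [Field K] {n : ℕ} (hn : 1 ≤ n)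
    (X u v : Matrix (Fin n) (Fin n) K) (hu : IsUT u) (hv : IsUT v)
    (k : ℕ) (hk1 : 1 ≤ k) (hk2 : k ≤ n) :
    Dmin k (u * X * v) = Dmin k X :=
  Dmin_mul_unitriangular_left_right_general X u v hu hv k hk1 hk2
end

section
/- Assume K is infinite. Let f be a polynomial function on H = Π_{α∈A} Mat(n,K) that is invariant under the action of U_Q, i.e. f(g.h) = f(h) for all g ∈ U_Q and h ∈ H. If f vanishes identically on the section S = Π_{α∈A} S_α, then f = 0. Equivalently, the restriction map π : K[H]^{U_Q} → K[S] is injective. -/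
open Matrix

/-- Membership in the piece `S_α` of the section, for an arrow `α` of the quiver with
source/target maps `s, t` and a choice map `ψ` assigning to each vertex an incident arrow:
if `α` is a loop, `S_α = S⁻(n)` when `α = ψ(q)` and `S_α = Mat(n)` otherwise; if `α` is not
a loop, `S_α = S⁻(n)` if `α = ψ(t α) ≠ ψ(s α)`, `S_α = S⁺(n)` if `α = ψ(s α) ≠ ψ(t α)`,
`S_α = Λ(n)` if `α = ψ(s α) = ψ(t α)`, and `S_α = Mat(n)` if `α ∉ Im ψ`. -/
def SMem {K : Type*} [Field K] {n : ℕ} {V A : Type*} (s t : A → V) (ψ : V → A) (α : A)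
    (M : Matrix (Fin n) (Fin n) K) : Prop :=
  (s α = t α → (α = ψ (s α) → LowerAnti M)) ∧
  (s α ≠ t α →
    ((α = ψ (t α) ∧ α ≠ ψ (s α)) → LowerAnti M) ∧
    ((α = ψ (s α) ∧ α ≠ ψ (t α)) → UpperAnti M) ∧
    ((α = ψ (s α) ∧ α = ψ (t α)) → AntiDiag M))

/-
Work over the fraction field `L` of `K[H]`, at the generic point `X`. The lower-left corner
minors of `X` do not vanish, since they are `±1` at the exchange matrix; hence each `X_α` is
brought to `S⁻(n)` by a unitriangular matrix on the left and to `S⁺(n)` by one on the right.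
Normalizing at every vertex `v` the arrow `ψ v` gives `g ∈ U_Q(L)` with `g.X ∈ S(L)`. As `K` is
infinite, the polynomial identities `f(g.h) = f(h)` and `f|_S = 0` persist over every
`K`-algebra, so `f = f(X) = f(g.X) = 0` in `L`.
-/

namespace MvPolynomial

variable {K σ τ : Type*} [CommRing K] [IsDomain K] [Infinite K] {L : Type*} [CommRing L]
  [Algebra K L]

theorem aeval_comp_eq_of_forall_eval_comp_eq {f g : MvPolynomial σ K}
    {v w : σ → MvPolynomial τ K}
    (h : ∀ x : τ → K, eval (fun i => eval x (v i)) f = eval (fun i => eval x (w i)) g)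
    (y : τ → L) : aeval (fun i => aeval y (v i)) f = aeval (fun i => aeval y (w i)) g := by
  have hbind : bind₁ v f = bind₁ w g :=
    funext fun x => (eval₂Hom_bind₁ _ _ _ _).trans ((h x).trans (eval₂Hom_bind₁ _ _ _ _).symm)
  simpa only [aeval_bind₁] using congrArg (aeval y) hbind

theorem aeval_eq_zero_of_forall_eval_eq_zero {Z : σ → Prop} {f : MvPolynomial σ K}
    (hf : ∀ x : σ → K, (∀ i, Z i → x i = 0) → eval x f = 0) {y : σ → L}
    (hy : ∀ i, Z i → y i = 0) : aeval y f = 0 := by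
  classical
  let v : σ → MvPolynomial σ K := fun i => if Z i then 0 else X i
  have hbind : bind₁ v f = 0 := funext fun x => by
    refine (eval₂Hom_bind₁ _ _ _ _).trans ((hf _ fun i hi => ?_).trans (map_zero _).symm)
    simp [v, hi]
  have hy' : (fun i => aeval y (v i)) = y := by
    ext i
    by_cases hi : Z i <;> simp [v, hi, hy]
  rw [← hy', ← aeval_bind₁, hbind, map_zero]

end MvPolynomial

namespace IsUT

variable {R S : Type*} [CommRing R] [CommRing S] {n : ℕ} {u : Matrix (Fin n) (Fin n) R}

theorem isUpperTriangular (h : IsUT u) : u.IsUpperTriangular := fun i j hij => h.2 i j hij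

theorem det_eq_one (h : IsUT u) : u.det = 1 := by
  simp [det_of_isUpperTriangular h.isUpperTriangular, h.1]

theorem inv_eq_adjugate (h : IsUT u) : u⁻¹ = u.adjugate := by
  rw [inv_def, h.det_eq_one, Ring.inverse_one, one_smul]

theorem inv (h : IsUT u) : IsUT u⁻¹ := by
  have : Invertible u := u.invertibleOfIsUnitDet (by simp [h.det_eq_one])
  have hinv : u⁻¹.IsUpperTriangular := blockTriangular_inv_of_blockTriangular h.isUpperTriangular
  refine ⟨fun i => ?_, fun i j hij => hinv hij⟩
  have hii := congrFun (congrFun u.mul_inv_of_invertible i) i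
  rwa [mul_apply, Finset.sum_eq_single i (fun k _ hki => ?_) (by simp), h.1, one_mul,
    one_apply_eq] at hii
  rcases lt_or_gt_of_ne hki with hk | hk
  · rw [h.2 i k hk, zero_mul]
  · rw [hinv hk, mul_zero]

theorem map {F : Type*} [FunLike F R S] [RingHomClass F R S] (h : IsUT u) (φ : F) :
    IsUT (u.map φ) :=
  ⟨fun i => by simp [h.1 i], fun i j hij => by simp [h.2 i j hij]⟩

theorem map_inv {F : Type*} [FunLike F R S] [RingHomClass F R S] (h : IsUT u) (φ : F) :
    u⁻¹.map φ = (u.map φ)⁻¹ := by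
  rw [h.inv_eq_adjugate, (h.map φ).inv_eq_adjugate, ← RingHom.coe_coe,
    ← RingHom.mapMatrix_apply, RingHom.map_adjugate, RingHom.mapMatrix_apply]

end IsUT

def antiTranspose {R : Type*} {n : ℕ} (M : Matrix (Fin n) (Fin n) R) : Matrix (Fin n) (Fin n) R :=
  Mᵀ.submatrix Fin.rev Fin.rev

theorem antiTranspose_antiTranspose {R : Type*} {n : ℕ} (M : Matrix (Fin n) (Fin n) R) :
    antiTranspose (antiTranspose M) = M := by
  ext i j; simp [antiTranspose]

def exchangeMatrix (R : Type*) [Zero R] [One R] (n : ℕ) : Matrix (Fin n) (Fin n) R :=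
  of fun i j => if (i : ℕ) + j = n - 1 then 1 else 0

theorem antiTranspose_exchangeMatrix (R : Type*) [Zero R] [One R] (n : ℕ) :
    antiTranspose (exchangeMatrix R n) = exchangeMatrix R n := by
  ext i j
  simp only [antiTranspose, exchangeMatrix, submatrix_apply, transpose_apply, of_apply,
    Fin.val_rev]
  congr 1
  apply propext
  omega

section AntiTriangular

variable {R : Type*} [CommRing R] {n : ℕ}

theorem LowerAnti.mul_isUpperTriangular {M w : Matrix (Fin n) (Fin n) R} (hM : LowerAnti M)
    (hw : w.IsUpperTriangular) : LowerAnti (M * w) := by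
  intro a b hab
  rw [mul_apply]
  refine Finset.sum_eq_zero fun c _ => ?_
  by_cases hc : (c : ℕ) ≤ b
  · rw [hM a c (by omega), zero_mul]
  · rw [hw (show b < c by omega), mul_zero]

theorem UpperAnti.isUpperTriangular_mul {M g : Matrix (Fin n) (Fin n) R} (hM : UpperAnti M)
    (hg : g.IsUpperTriangular) : UpperAnti (g * M) := by
  intro a b hab
  rw [mul_apply]
  refine Finset.sum_eq_zero fun c _ => ?_
  by_cases hc : c < a
  · rw [hg hc, zero_mul]
  · rw [hM c b (by omega), mul_zero]

theorem antiDiag_of_lowerAnti_of_upperAnti {M : Matrix (Fin n) (Fin n) R} (hl : LowerAnti M)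
    (hu : UpperAnti M) : AntiDiag M := fun a b hab =>
  (Nat.lt_or_gt_of_ne hab).elim (hl a b) (hu a b)

theorem antiTranspose_mul (M N : Matrix (Fin n) (Fin n) R) :
    antiTranspose (M * N) = antiTranspose N * antiTranspose M := by
  rw [antiTranspose, transpose_mul]
  exact (submatrix_mul_equiv Nᵀ Mᵀ Fin.rev Fin.revPerm Fin.rev).symm

theorem IsUT.antiTranspose {u : Matrix (Fin n) (Fin n) R} (h : IsUT u) :
    IsUT (antiTranspose u) :=
  ⟨fun i => h.1 _, fun i j hij => h.2 _ _ (by simp; omega)⟩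

theorem upperAnti_of_lowerAnti_antiTranspose {M : Matrix (Fin n) (Fin n) R}
    (h : LowerAnti (antiTranspose M)) : UpperAnti M := by
  intro a b hab
  simpa [antiTranspose] using h b.rev a.rev (by simp; omega)

end AntiTriangular

namespace LowerAntiNormalForm

section

variable {R : Type*} [CommRing R] {n : ℕ} (X : Matrix (Fin n) (Fin n) R) (a : Fin n)

/-- Row `a` of a unitriangular `u` with `u * X` lower anti-triangular is a solution `w` of
`w ᵥ* rowSystem X a = rowTarget X a`: the columns `q < n - 1 - a` say `(w ᵥ* X) q = 0`, and the
columns `n - 1 - a + j` for `j ≤ a` pin `w j = if j = a then 1 else 0`. Up to sign, its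
determinant is the lower-left corner minor of `X` of order `n - 1 - a`. -/
def rowSystem : Matrix (Fin n) (Fin n) R :=
  of fun j q =>
    if a < j ∧ (q : ℕ) < n - 1 - a then X j q
    else if j ≤ a ∧ (q : ℕ) = n - 1 - a + j then 1 else 0

def rowTarget : Fin n → R := fun q =>
  if (q : ℕ) < n - 1 - a then -X a q else if (q : ℕ) = n - 1 then 1 else 0

variable {X a} {w : Fin n → R}

theorem eq_of_vecMul_rowSystem (hw : w ᵥ* rowSystem X a = rowTarget X a) {j : Fin n}
    (hj : j ≤ a) : w j = if j = a then 1 else 0 := by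
  have hq := congrFun hw ⟨n - 1 - a + j, by omega⟩
  rw [vecMul, dotProduct, Finset.sum_eq_single j] at hq
  · simpa [rowSystem, rowTarget, hj, Fin.ext_iff,
      show (j : ℕ) = a ↔ n - 1 - a + j = n - 1 by omega] using hq
  · intro k _ hkj
    simp [rowSystem, Fin.ext_iff] at hkj ⊢
    omega
  · simp

theorem vecMul_apply_eq_zero_of_vecMul_rowSystem (hw : w ᵥ* rowSystem X a = rowTarget X a)
    {q : Fin n} (hq : (q : ℕ) < n - 1 - a) : (w ᵥ* X) q = 0 := by
  have hsplit : ∀ k, w k * X k q = w k * rowSystem X a k q + if k = a then X a q else 0 := by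
    intro k
    rcases lt_trichotomy k a with hk | rfl | hk
    · simp [eq_of_vecMul_rowSystem hw hk.le, hk.ne]
    · simp only [eq_of_vecMul_rowSystem hw le_rfl, rowSystem, of_apply]
      simp [show (q : ℕ) ≠ n - 1 - k + k by omega]
    · simp [rowSystem, hk, hq, hk.ne']
  have hsys := congrFun hw q
  simp only [vecMul, dotProduct] at hsys ⊢
  rw [Finset.sum_congr rfl fun k _ => hsplit k, Finset.sum_add_distrib, hsys]
  simp [rowTarget, hq]

theorem exists_isUT_lowerAnti_mul (hX : ∀ a, IsUnit (rowSystem X a).det) :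
    ∃ u : Matrix (Fin n) (Fin n) R, IsUT u ∧ LowerAnti (u * X) := by
  have hu : ∀ a, (rowTarget X a ᵥ* (rowSystem X a)⁻¹) ᵥ* rowSystem X a = rowTarget X a :=
    fun a => by rw [vecMul_vecMul, nonsing_inv_mul _ (hX a), vecMul_one]
  refine ⟨of fun a => rowTarget X a ᵥ* (rowSystem X a)⁻¹, ⟨fun i => ?_, fun i j hij => ?_⟩,
    fun a q haq => ?_⟩
  · simpa using eq_of_vecMul_rowSystem (hu i) le_rfl
  · simpa [Fin.ne_of_val_ne hij.ne] using eq_of_vecMul_rowSystem (hu i) hij.le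
  · exact vecMul_apply_eq_zero_of_vecMul_rowSystem (hu a) (by omega)

theorem exists_isUT_mul_upperAnti (hX : ∀ a, IsUnit (rowSystem (antiTranspose X) a).det) :
    ∃ r : Matrix (Fin n) (Fin n) R, IsUT r ∧ UpperAnti (X * r) := by
  obtain ⟨u, hu, hl⟩ := exists_isUT_lowerAnti_mul hX
  refine ⟨antiTranspose u, hu.antiTranspose, upperAnti_of_lowerAnti_antiTranspose ?_⟩
  rwa [antiTranspose_mul, antiTranspose_antiTranspose]

end

theorem rowSystem_map {R S : Type*} [CommRing R] [CommRing S] {n : ℕ} (φ : R →+* S)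
    (X : Matrix (Fin n) (Fin n) R) (a : Fin n) :
    (rowSystem X a).map φ = rowSystem (X.map φ) a := by
  ext j q
  simp only [map_apply, rowSystem, of_apply, apply_ite φ, map_one, map_zero]

theorem isUnit_det_rowSystem_exchangeMatrix {R : Type*} [CommRing R] {n : ℕ} (a : Fin n) :
    IsUnit (rowSystem (exchangeMatrix R n) a).det := by
  let f : Fin n → Fin n := fun j => if h : j ≤ a then ⟨n - 1 - a + j, by omega⟩ else j.rev
  have hf : Function.Injective f := by
    intro i j h
    simp only [f] at h
    split_ifs at h <;> simp [Fin.ext_iff] at h <;> omega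
  have hperm : rowSystem (exchangeMatrix R n) a
      = Equiv.Perm.permMatrix R (Equiv.ofBijective f hf.bijective_of_finite) := by
    ext j q
    simp only [rowSystem, exchangeMatrix, Equiv.Perm.permMatrix, PEquiv.toMatrix_apply,
      Equiv.toPEquiv_apply, Option.mem_def, Option.some.injEq, Equiv.ofBijective_apply, of_apply,
      f, Fin.ext_iff]
    split_ifs <;> simp only [Fin.lt_def, Fin.le_def, Fin.val_rev] at * <;> omega
  rw [hperm, det_permutation]
  rcases Int.units_eq_one_or (Equiv.Perm.sign (Equiv.ofBijective f hf.bijective_of_finite))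
    with h | h <;> simp [h]

theorem isUnit_det_rowSystem_map_of_injective {R S L : Type*} [CommRing R] [CommRing S]
    [Nontrivial S] [Field L] {n : ℕ} {ι : R →+* L} (hι : Function.Injective ι) (ε : R →+* S)
    {M : Matrix (Fin n) (Fin n) R} {a : Fin n} (hM : IsUnit (rowSystem (M.map ε) a).det) :
    IsUnit (rowSystem (M.map ι) a).det := by
  rw [← rowSystem_map, ← RingHom.mapMatrix_apply, ← RingHom.map_det] at hM ⊢
  rw [isUnit_iff_ne_zero, map_ne_zero_iff _ hι]
  intro h0
  rw [h0, map_zero] at hM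
  exact not_isUnit_zero hM

theorem exists_normalizers_of_map_eq_exchangeMatrix {R S L : Type*} [CommRing R] [CommRing S]
    [Nontrivial S] [Field L] {n : ℕ} {ι : R →+* L} (hι : Function.Injective ι) (ε : R →+* S)
    {M : Matrix (Fin n) (Fin n) R} (hM : M.map ε = exchangeMatrix S n) :
    (∃ u, IsUT u ∧ LowerAnti (u * M.map ι)) ∧ ∃ r, IsUT r ∧ UpperAnti (M.map ι * r) := by
  refine ⟨exists_isUT_lowerAnti_mul fun a => isUnit_det_rowSystem_map_of_injective hι ε ?_,
    exists_isUT_mul_upperAnti fun a =>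
      isUnit_det_rowSystem_map_of_injective (M := antiTranspose M) hι ε ?_⟩
  · rw [hM]; exact isUnit_det_rowSystem_exchangeMatrix a
  · rw [show (antiTranspose M).map ε = antiTranspose (M.map ε) from rfl, hM,
      antiTranspose_exchangeMatrix]
    exact isUnit_det_rowSystem_exchangeMatrix a

end LowerAntiNormalForm

namespace QuiverRep

open MvPolynomial

variable {V A : Type*} {n : ℕ}

def coords {R : Type*} (h : A → Matrix (Fin n) (Fin n) R) : A × Fin n × Fin n → R :=
  fun p => h p.1 p.2.1 p.2.2

theorem coords_map {R S F : Type*} [FunLike F R S] (φ : F) (h : A → Matrix (Fin n) (Fin n) R) :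
    (fun p => φ (coords h p)) = coords fun α => (h α).map φ := rfl

noncomputable def act {R : Type*} [CommRing R] (s t : A → V) (g : V → Matrix (Fin n) (Fin n) R)
    (h : A → Matrix (Fin n) (Fin n) R) (α : A) : Matrix (Fin n) (Fin n) R :=
  g (t α) * h α * (g (s α))⁻¹

theorem coords_act_map {R S F : Type*} [CommRing R] [CommRing S] [FunLike F R S]
    [RingHomClass F R S] (φ : F) (s t : A → V) {g : V → Matrix (Fin n) (Fin n) R}
    (hg : ∀ v, IsUT (g v)) (h : A → Matrix (Fin n) (Fin n) R) :
    (fun p => φ (coords (act s t g h) p))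
      = coords (act s t (fun v => (g v).map φ) fun α => (h α).map φ) := by
  funext p
  rw [coords, coords, act, act, ← (hg (s p.1)).map_inv φ, ← RingHom.coe_coe φ, ← Matrix.map_mul,
    ← Matrix.map_mul, map_apply]

def SectionZero (s t : A → V) (ψ : V → A) (α : A) (a b : Fin n) : Prop :=
  (((s α = t α ∧ α = ψ (s α)) ∨ (s α ≠ t α ∧ α = ψ (t α) ∧ α ≠ ψ (s α))) ∧
      (a : ℕ) + b < n - 1) ∨
    (s α ≠ t α ∧ α = ψ (s α) ∧ α ≠ ψ (t α) ∧ n - 1 < (a : ℕ) + b) ∨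
    (s α ≠ t α ∧ α = ψ (s α) ∧ α = ψ (t α) ∧ (a : ℕ) + b ≠ n - 1)

theorem sMem_iff {F : Type*} [Field F] (s t : A → V) (ψ : V → A) (α : A)
    (M : Matrix (Fin n) (Fin n) F) :
    SMem s t ψ α M ↔ ∀ a b, SectionZero s t ψ α a b → M a b = 0 := by
  simp only [SMem, SectionZero, LowerAnti, UpperAnti, AntiDiag]
  constructor
  · rintro ⟨hloop, hne⟩ a b
      (⟨⟨hst, hα⟩ | ⟨hst, hα⟩, hab⟩ | ⟨hst, hα, hα', hab⟩ | ⟨hst, hα, hα', hab⟩)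
    · exact hloop hst hα a b hab
    · exact (hne hst).1 hα a b hab
    · exact (hne hst).2.1 ⟨hα, hα'⟩ a b hab
    · exact (hne hst).2.2 ⟨hα, hα'⟩ a b hab
  · intro h
    exact ⟨fun hst hα a b hab => h a b (Or.inl ⟨Or.inl ⟨hst, hα⟩, hab⟩),
      fun hst => ⟨fun hα a b hab => h a b (Or.inl ⟨Or.inr ⟨hst, hα⟩, hab⟩),
        fun hα a b hab => h a b (Or.inr (Or.inl ⟨hst, hα.1, hα.2, hab⟩)),
        fun hα a b hab => h a b (Or.inr (Or.inr ⟨hst, hα.1, hα.2, hab⟩))⟩⟩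

theorem aeval_coords_eq_zero_of_vanishing_on_section {K : Type*} [Field K] [Infinite K]
    {s t : A → V} {ψ : V → A} {f : MvPolynomial (A × Fin n × Fin n) K}
    (hvanish : ∀ h : A → Matrix (Fin n) (Fin n) K, (∀ α, SMem s t ψ α (h α)) →
      eval (coords h) f = 0)
    {L : Type*} [Field L] [Algebra K L] {h : A → Matrix (Fin n) (Fin n) L}
    (hh : ∀ α, SMem s t ψ α (h α)) : aeval (coords h) f = 0 :=
  aeval_eq_zero_of_forall_eval_eq_zero (Z := fun p => SectionZero s t ψ p.1 p.2.1 p.2.2)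
    (fun x hx => hvanish (fun α => of fun a b => x (α, a, b))
      fun α => (sMem_iff s t ψ α _).2 fun a b hab => hx (α, a, b) hab)
    fun p hp => (sMem_iff s t ψ p.1 _).1 (hh p.1) _ _ hp

theorem aeval_coords_act_eq_of_invariant {K : Type*} [CommRing K] [IsDomain K] [Infinite K]
    {s t : A → V} {f : MvPolynomial (A × Fin n × Fin n) K}
    (hinv : ∀ g : V → Matrix (Fin n) (Fin n) K, (∀ v, IsUT (g v)) →
      ∀ h : A → Matrix (Fin n) (Fin n) K, eval (coords (act s t g h)) f = eval (coords h) f)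
    {L : Type*} [CommRing L] [Algebra K L] {g : V → Matrix (Fin n) (Fin n) L}
    (hg : ∀ v, IsUT (g v)) (h : A → Matrix (Fin n) (Fin n) L) :
    aeval (coords (act s t g h)) f = aeval (coords h) f := by
  -- The entries of `g` become extra variables, next to those of `h`.
  let G : V → Matrix (Fin n) (Fin n) (MvPolynomial ((V × Fin n × Fin n) ⊕ (A × Fin n × Fin n)) K) :=
    fun v => of fun i j => if i = j then 1 else if i < j then X (.inl (v, i, j)) else 0
  let H : A → Matrix (Fin n) (Fin n) (MvPolynomial ((V × Fin n × Fin n) ⊕ (A × Fin n × Fin n)) K) :=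
    fun α => of fun a b => X (.inr (α, a, b))
  have hG : ∀ v, IsUT (G v) := fun v =>
    ⟨fun i => by simp [G], fun i j hij => by
      have hji : j < i := hij
      simp [G, hji.ne', not_lt_of_gt hji]⟩
  set y : (V × Fin n × Fin n) ⊕ (A × Fin n × Fin n) → L := Sum.elim (coords g) (coords h)
  have key := aeval_comp_eq_of_forall_eval_comp_eq (f := f) (g := f)
    (v := coords (act s t G H)) (w := coords H) (fun x => ?_) y
  · have hGy : ∀ v, (G v).map (aeval y) = g v := fun v => by
      ext i j
      rcases lt_trichotomy i j with hij | rfl | hij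
      · simp [G, y, hij.ne, hij, coords]
      · simp [G, (hg v).1]
      · simp [G, hij.ne', not_lt_of_gt hij, (hg v).2 i j hij]
    have hHy : ∀ α, (H α).map (aeval y) = h α := fun α => by
      ext a b
      simp [H, y, coords]
    simpa only [coords_act_map (aeval y) s t hG H, coords_map (aeval y), hGy, hHy] using key
  · exact (congrArg (eval · f) (coords_act_map (eval x) s t hG H)).trans
      (hinv _ (fun v => (hG v).map _) _)

theorem exists_isUT_sMem_act {L : Type*} [Field L] (s t : A → V) (ψ : V → A)
    {h : A → Matrix (Fin n) (Fin n) L} (hlow : ∀ α, ∃ u, IsUT u ∧ LowerAnti (u * h α))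
    (hup : ∀ α, ∃ r, IsUT r ∧ UpperAnti (h α * r)) :
    ∃ g : V → Matrix (Fin n) (Fin n) L, (∀ v, IsUT (g v)) ∧ ∀ α, SMem s t ψ α (act s t g h α) := by
  classical
  choose u hu hlow using hlow
  choose r hr hup using hup
  -- At `v`, normalize the arrow `ψ v`: from the left if `v` is its target, else from the right.
  let g : V → Matrix (Fin n) (Fin n) L := fun v => if t (ψ v) = v then u (ψ v) else (r (ψ v))⁻¹
  have hg : ∀ v, IsUT (g v) := fun v => by
    by_cases hv : t (ψ v) = v
    · simpa [g, hv] using hu (ψ v)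
    · simpa [g, hv] using (hr (ψ v)).inv
  have hlowAct : ∀ α, α = ψ (t α) → LowerAnti (act s t g h α) := fun α hα => by
    have hgt : g (t α) = u α := by simp [g, ← hα]
    rw [act, hgt]
    exact (hlow α).mul_isUpperTriangular (hg (s α)).inv.isUpperTriangular
  have hupAct : ∀ α, α = ψ (s α) → s α ≠ t α → UpperAnti (act s t g h α) := fun α hα hst => by
    have hgs : g (s α) = (r α)⁻¹ := by simp [g, ← hα, Ne.symm hst]
    rw [act, hgs, nonsing_inv_nonsing_inv _ (by simp [(hr α).det_eq_one]), Matrix.mul_assoc]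
    exact (hup α).isUpperTriangular_mul (hg (t α)).isUpperTriangular
  refine ⟨g, hg, fun α => ⟨fun hst hα => hlowAct α (hst ▸ hα),
    fun hst => ⟨fun hα => hlowAct α hα.1, fun hα => hupAct α hα.1 hst, fun hα => ?_⟩⟩⟩
  exact antiDiag_of_lowerAnti_of_upperAnti (hlowAct α hα.2) (hupAct α hα.1 hst)

end QuiverRep

theorem invariant_polynomial_vanishing_on_section_eq_zero_general
    {K : Type*} [Field K] [Infinite K] {n : ℕ}
    {V A : Type*} (s t : A → V) (ψ : V → A)
    (f : MvPolynomial (A × Fin n × Fin n) K)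
    (hinv : ∀ g : V → Matrix (Fin n) (Fin n) K, (∀ v, IsUT (g v)) →
      ∀ h : A → Matrix (Fin n) (Fin n) K,
        MvPolynomial.eval
            (fun p : A × Fin n × Fin n =>
              (g (t p.1) * h p.1 * (g (s p.1))⁻¹) p.2.1 p.2.2) f
          = MvPolynomial.eval (fun p : A × Fin n × Fin n => h p.1 p.2.1 p.2.2) f)
    (hvanish : ∀ h : A → Matrix (Fin n) (Fin n) K, (∀ α : A, SMem s t ψ α (h α)) →
      MvPolynomial.eval (fun p : A × Fin n × Fin n => h p.1 p.2.1 p.2.2) f = 0) :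
    f = 0 := by
  let P := MvPolynomial (A × Fin n × Fin n) K
  let L := FractionRing P
  have hι : Function.Injective (algebraMap P L) := IsFractionRing.injective P L
  let X : A → Matrix (Fin n) (Fin n) P := fun α => of fun a b => MvPolynomial.X (α, a, b)
  have hX : ∀ α, (X α).map (MvPolynomial.eval fun p => exchangeMatrix K n p.2.1 p.2.2)
      = exchangeMatrix K n := fun α => by ext a b; simp [X]
  have hnormal α := LowerAntiNormalForm.exists_normalizers_of_map_eq_exchangeMatrix hι _ (hX α)
  obtain ⟨g, hg, hgS⟩ := QuiverRep.exists_isUT_sMem_act s t ψ (fun α => (hnormal α).1)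
    fun α => (hnormal α).2
  have hgeneric : MvPolynomial.aeval (QuiverRep.coords fun α => (X α).map (algebraMap P L)) f
      = algebraMap P L f := by
    have h := MvPolynomial.comp_aeval_apply (IsScalarTower.toAlgHom K P L) (f := MvPolynomial.X) f
    rw [MvPolynomial.aeval_X_left_apply] at h
    exact h.symm
  rw [← QuiverRep.aeval_coords_act_eq_of_invariant hinv hg,
    QuiverRep.aeval_coords_eq_zero_of_vanishing_on_section hvanish hgS] at hgeneric
  exact hι (hgeneric.symm.trans (map_zero _).symm)

/-- for infinite `K`: a `U_Q`-invariant polynomial function on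
`H = Π_α Mat(n,K)` that vanishes identically on the section `S = Π_α S_α` is zero;
i.e. the restriction map `π : K[H]^{U_Q} → K[S]` is injective. A polynomial function
on `H` is encoded as an `MvPolynomial` in the variables `(α, a, b)`, evaluated at
`h : A → Matrix (Fin n) (Fin n) K` via `(α, a, b) ↦ (h α) a b`. -/
theorem invariant_polynomial_vanishing_on_section_eq_zero
    {K : Type*} [Field K] [Infinite K] {n : ℕ} (hn : 1 ≤ n)
    {V A : Type*} [Fintype V] [Fintype A] (s t : A → V) (ψ : V → A)
    (hψ : ∀ v : V, s (ψ v) = v ∨ t (ψ v) = v)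
    (f : MvPolynomial (A × Fin n × Fin n) K)
    (hinv : ∀ g : V → Matrix (Fin n) (Fin n) K, (∀ v, IsUT (g v)) →
      ∀ h : A → Matrix (Fin n) (Fin n) K,
        MvPolynomial.eval
            (fun p : A × Fin n × Fin n =>
              (g (t p.1) * h p.1 * (g (s p.1))⁻¹) p.2.1 p.2.2) f
          = MvPolynomial.eval (fun p : A × Fin n × Fin n => h p.1 p.2.1 p.2.2) f)
    (hvanish : ∀ h : A → Matrix (Fin n) (Fin n) K, (∀ α : A, SMem s t ψ α (h α)) →
      MvPolynomial.eval (fun p : A × Fin n × Fin n => h p.1 p.2.1 p.2.2) f = 0) :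
    f = 0 :=
  invariant_polynomial_vanishing_on_section_eq_zero_general s t ψ f hinv hvanish
end

section
/- Fix (i,k) with i' < k and regard P_{ik}(X,Y) as a polynomial in the 2n² variables x_{ab}, y_{ab}. Then P_{ik}(X,Y) = f₀·x_{ik} + f₁, where f₀ and f₁ are polynomials involving only the variables y_{ab} and the variables x_{ab} with (a,b) ≺ (i,k), and f₀ is a nonzero polynomial. (Order on pairs: (a,b) ≺ (i,k) iff b < k, or b = k and a > i.) -/
open Matrix

/-!
Expanding `M_{ik}(X)` along its first row (row `i` of `X`) gives `x_{ik}` times its cofactor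
plus terms in the other entries of that row, which lie in columns `< k`. The cofactor is, up to
sign, the minor of `X` on rows `i+1, …, n` and columns `1, …, n-i`, and the other rows of the
matrix of `M_{ik}` meet column `k` only below row `i`; the remaining summands `M_{ij} N_{jk}`,
`j < k`, only see columns `< k` of `X`. So `f₀ = cof · N_{kk}`, a product of minors of generic
matrices, hence nonzero.
-/

open MvPolynomial

namespace Matrix

variable {ι R : Type*} [Fintype ι] [DecidableEq ι] [CommRing R]

theorem det_mem {S : Type*} [SetLike S R] [SubringClass S R] (s : S) (A : Matrix ι ι R)
    (h : ∀ a b, A a b ∈ s) : A.det ∈ s := by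
  rw [det_apply]
  exact sum_mem fun σ _ => by
    rw [Units.smul_def]
    exact zsmul_mem (prod_mem fun a _ => h _ _) _

theorem adjugate_apply_mem {S : Type*} [SetLike S R] [SubringClass S R] (s : S)
    (A : Matrix ι ι R) (c r : ι) (h : ∀ a ≠ r, ∀ b, A a b ∈ s) : adjugate A c r ∈ s := by
  rw [adjugate_apply]
  refine det_mem s _ fun a b => ?_
  rw [updateRow_apply]
  split_ifs with ha
  · rw [Pi.single_apply]
    split_ifs
    exacts [one_mem s, zero_mem s]
  · exact h a ha b

theorem det_ne_zero_of_eq_X {σ : Type*} [Nontrivial R] (A : Matrix ι ι (MvPolynomial σ R))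
    (f : ι × ι → σ) (hf : Function.Injective f) (hA : ∀ a b, A a b = X (f (a, b))) :
    A.det ≠ 0 := by
  have : A = (rename f).toRingHom.mapMatrix (mvPolynomialX ι ι R) := by
    ext a b
    simp [hA, mvPolynomialX_apply]
  rw [this, ← RingHom.map_det, AlgHom.toRingHom_eq_coe, AlgHom.coe_toRingHom,
    map_ne_zero_iff _ (rename_injective f hf)]
  exact det_mvPolynomialX_ne_zero ι R

theorem adjugate_last_zero_ne_zero {σ : Type*} [Nontrivial R] {m : ℕ}
    (A : Matrix (Fin (m + 1)) (Fin (m + 1)) (MvPolynomial σ R))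
    (f : Fin m × Fin m → σ) (hf : Function.Injective f)
    (hA : ∀ a b, A a.succ b.castSucc = X (f (a, b))) : adjugate A (Fin.last m) 0 ≠ 0 := by
  rw [adjugate_fin_succ_eq_det_submatrix, Fin.succAbove_zero, Fin.succAbove_last, Ne,
    neg_one_pow_mul_eq_zero_iff]
  exact det_ne_zero_of_eq_X _ f hf hA

end Matrix

section Entries

variable {R : Type*} {n : ℕ}

theorem ent_eq_of_val_add_one [Zero R] (X : Matrix (Fin n) (Fin n) R) {a b : ℕ} (a' b' : Fin n)
    (ha : a'.val + 1 = a) (hb : b'.val + 1 = b) : ent X a b = X a' b' := by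
  subst ha hb
  simp [ent]

theorem ent_mem {S : Type*} [Zero R] [SetLike S R] [ZeroMemClass S R] (s : S)
    (X : Matrix (Fin n) (Fin n) R) (a b : ℕ)
    (h : ∀ a' b' : Fin n, a'.val + 1 = a → b'.val + 1 = b → X a' b' ∈ s) : ent X a b ∈ s := by
  unfold ent
  split_ifs with hab
  · exact h _ _ (by simp; omega) (by simp; omega)
  · exact zero_mem s

end Entries

section Generic

variable (n : ℕ) (K : Type*) [CommRing K]

noncomputable def xMatrix :
    Matrix (Fin n) (Fin n) (MvPolynomial ((Fin n × Fin n) ⊕ (Fin n × Fin n)) K) :=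
  Matrix.of fun a b => X (Sum.inl (a, b))

noncomputable def yMatrix :
    Matrix (Fin n) (Fin n) (MvPolynomial ((Fin n × Fin n) ⊕ (Fin n × Fin n)) K) :=
  Matrix.of fun a b => X (Sum.inr (a, b))

def earlierVars (i k : ℕ) : Set ((Fin n × Fin n) ⊕ (Fin n × Fin n)) :=
  {v | Sum.elim (fun p : Fin n × Fin n =>
    (p.2 : ℕ) + 1 < k ∨ ((p.2 : ℕ) + 1 = k ∧ i < (p.1 : ℕ) + 1)) (fun _ => True) v}

variable {n K} {i k : ℕ}

theorem ent_xMatrix_mem {a b : ℕ} (h : b < k ∨ b = k ∧ i < a) :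
    ent (xMatrix n K) a b ∈ supported K (earlierVars n i k) :=
  ent_mem _ _ a b fun a' b' ha hb => by
    refine Algebra.subset_adjoin (Set.mem_image_of_mem X ?_)
    simp only [earlierVars, Set.mem_ofPred_eq, Sum.elim_inl]
    omega

theorem ent_yMatrix_mem (a b : ℕ) : ent (yMatrix n K) a b ∈ supported K (earlierVars n i k) :=
  ent_mem _ _ a b fun _ _ _ _ => Algebra.subset_adjoin (Set.mem_image_of_mem X trivial)

theorem Nmin_yMatrix_mem (j : ℕ) : Nmin j k (yMatrix n K) ∈ supported K (earlierVars n i k) :=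
  det_mem _ _ fun _ _ => ent_yMatrix_mem _ _

theorem Mmin_xMatrix_mem (hik : n + 1 - i ≤ k) {j : ℕ} (hj : j < k) :
    Mmin i j (xMatrix n K) ∈ supported K (earlierVars n i k) :=
  det_mem _ _ fun _ c => ent_xMatrix_mem (Or.inl (by have := c.isLt; split_ifs <;> omega))

theorem Nmin_yMatrix_self_ne_zero [Nontrivial K] (hk : 1 ≤ k) : Nmin k k (yMatrix n K) ≠ 0 := by
  refine det_ne_zero_of_eq_X _
    (fun p => Sum.inr (⟨k - 1 + p.1, by omega⟩, ⟨p.2, by omega⟩)) ?_ fun r c => ?_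
  · rintro ⟨r, c⟩ ⟨r', c'⟩ h
    simp only [Sum.inr.injEq, Prod.mk.injEq, Fin.mk.injEq] at h
    simp only [Prod.mk.injEq, Fin.ext_iff]
    omega
  · exact ent_eq_of_val_add_one _ _ _ (by split_ifs <;> simp <;> omega) (by simp; omega)

end Generic

noncomputable def MminMatrix {R : Type*} [CommRing R] {n : ℕ} (i j : ℕ)
    (X : Matrix (Fin n) (Fin n) R) : Matrix (Fin (n + 1 - i)) (Fin (n + 1 - i)) R :=
  Matrix.of fun r c => ent X (i + r.val) (if c.val < n - i then 1 + c.val else j)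

theorem Pmin_eq_add_sum {R : Type*} [CommRing R] {n : ℕ} {i k : ℕ} (hik : n + 1 - i ≤ k)
    (X Y : Matrix (Fin n) (Fin n) R) :
    Pmin i k X Y = Mmin i k X * Nmin k k Y
      + ∑ j ∈ Finset.Ico (n + 1 - i) k, Mmin i j X * Nmin j k Y := by
  rw [Pmin, ← Finset.Ico_insert_right hik, Finset.sum_insert Finset.right_notMem_Ico]

section Triangular

variable {n : ℕ} {K : Type*} [CommRing K] {i k : ℕ}

theorem MminMatrix_xMatrix_mem (hik : n + 1 - i < k) (r c : Fin (n + 1 - i))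
    (hrc : r.val ≠ 0 ∨ c.val ≠ n - i) :
    MminMatrix i k (xMatrix n K) r c ∈ supported K (earlierVars n i k) := by
  have := c.isLt
  refine ent_xMatrix_mem ?_
  split_ifs <;> omega

theorem adjugate_MminMatrix_xMatrix_ne_zero [Nontrivial K] (hi : i ≤ n) :
    adjugate (MminMatrix i k (xMatrix n K)) ⟨n - i, by omega⟩ ⟨0, by omega⟩ ≠ 0 := by
  have hm : n + 1 - i = n - i + 1 := by omega
  have hA := adjugate_last_zero_ne_zero ((MminMatrix i k (xMatrix n K)).submatrix
      (finCongr hm).symm (finCongr hm).symm)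
    (fun p => Sum.inl (⟨i + p.1, by omega⟩, ⟨p.2, by omega⟩)) ?_ fun r c => ?_
  · rw [adjugate_submatrix_equiv_self, submatrix_apply] at hA
    convert hA using 2 <;> ext <;> simp
  · rintro ⟨r, c⟩ ⟨r', c'⟩ h
    simp only [Sum.inl.injEq, Prod.mk.injEq, Fin.mk.injEq] at h
    simp only [Prod.mk.injEq, Fin.ext_iff]
    omega
  · exact ent_eq_of_val_add_one _ _ _ (by simp; omega) (by simp; omega)

theorem Mmin_xMatrix_triangular [Nontrivial K] (hi : i ≤ n) (hik : n + 1 - i < k) :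
    ∃ f₀ ∈ supported K (earlierVars n i k), ∃ f₁ ∈ supported K (earlierVars n i k), f₀ ≠ 0 ∧
      Mmin i k (xMatrix n K) = f₀ * ent (xMatrix n K) i k + f₁ := by
  set A := MminMatrix i k (xMatrix n K)
  set r₀ : Fin (n + 1 - i) := ⟨0, by omega⟩
  set c₀ : Fin (n + 1 - i) := ⟨n - i, by omega⟩
  have hcorner : A r₀ c₀ = ent (xMatrix n K) i k := by simp [A, MminMatrix, r₀, c₀]
  have hadj (c) : adjugate A c r₀ ∈ supported K (earlierVars n i k) :=
    adjugate_apply_mem _ _ _ _ fun r hr b =>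
      MminMatrix_xMatrix_mem hik r b (Or.inl fun h => hr (Fin.ext h))
  refine ⟨adjugate A c₀ r₀, hadj c₀, ∑ c ∈ {c₀}ᶜ, A r₀ c * adjugate A c r₀,
    sum_mem fun c hc => mul_mem (MminMatrix_xMatrix_mem hik _ _ (Or.inr ?_)) (hadj c),
    adjugate_MminMatrix_xMatrix_ne_zero hi, ?_⟩
  · simpa [Fin.ext_iff, c₀] using hc
  · change A.det = _
    rw [det_eq_sum_mul_adjugate_row _ r₀, Fintype.sum_eq_add_sum_compl c₀, hcorner, mul_comm]

end Triangular

open MvPolynomial in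
/-- regarded as a polynomial in the `2n²` variables `x_{ab}, y_{ab}`,
`P_{ik}(X,Y) = f₀ · x_{ik} + f₁` where `f₀ ≠ 0` and `f₀, f₁` involve only the
variables `y_{ab}` and the variables `x_{ab}` with `(a,b) ≺ (i,k)`
(`(a,b) ≺ (i,k)` iff `b < k`, or `b = k` and `a > i`). -/
theorem Pmin_triangular {K : Type*} [Field K] {n : ℕ}
    (i k : ℕ) (hi2 : i ≤ n) (hk : k ≤ n) (hik : n + 1 - i < k) :
    ∃ f₀ f₁ : MvPolynomial ((Fin n × Fin n) ⊕ (Fin n × Fin n)) K,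
      f₀ ≠ 0 ∧
      Pmin i k
          (Matrix.of fun a b : Fin n => (X (Sum.inl (a, b)) : MvPolynomial _ K))
          (Matrix.of fun a b : Fin n => (X (Sum.inr (a, b)) : MvPolynomial _ K))
        = f₀ * X (Sum.inl (⟨i - 1, by omega⟩, ⟨k - 1, by omega⟩)) + f₁ ∧
      (∀ v ∈ f₀.vars,
        Sum.elim (fun p : Fin n × Fin n =>
          (p.2 : ℕ) + 1 < k ∨ ((p.2 : ℕ) + 1 = k ∧ i < (p.1 : ℕ) + 1)) (fun _ => True) v) ∧
      (∀ v ∈ f₁.vars,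
        Sum.elim (fun p : Fin n × Fin n =>
          (p.2 : ℕ) + 1 < k ∨ ((p.2 : ℕ) + 1 = k ∧ i < (p.1 : ℕ) + 1)) (fun _ => True) v) := by
  obtain ⟨f₀, hf₀, f₁, hf₁, hf₀_ne, hM⟩ := Mmin_xMatrix_triangular (K := K) hi2 hik
  have hN (j : ℕ) : Nmin j k (yMatrix n K) ∈ supported K (earlierVars n i k) := Nmin_yMatrix_mem j
  refine ⟨f₀ * Nmin k k (yMatrix n K), f₁ * Nmin k k (yMatrix n K)
      + ∑ j ∈ Finset.Ico (n + 1 - i) k, Mmin i j (xMatrix n K) * Nmin j k (yMatrix n K),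
    mul_ne_zero hf₀_ne (Nmin_yMatrix_self_ne_zero (by omega)), ?_,
    mem_supported.1 (mul_mem hf₀ (hN k)), mem_supported.1 ?_⟩
  · change Pmin i k (xMatrix n K) (yMatrix n K) = _
    rw [Pmin_eq_add_sum hik.le, hM, ent_eq_of_val_add_one _ ⟨i - 1, by omega⟩ ⟨k - 1, by omega⟩
      (by simp; omega) (by simp; omega), xMatrix, of_apply]
    ring
  · exact add_mem (mul_mem hf₁ (hN k)) (sum_mem fun j hj =>
      mul_mem (Mmin_xMatrix_mem hik.le (Finset.mem_Ico.1 hj).2) (hN j))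
end

section
/- Fix (i,k) with i' < k. There is a sign ε ∈ {+1,−1}, depending only on n, i, k, such that for every X ∈ Mat(n,K) and every upper anti-triangular matrix S⁺ (entries at positions (a,b) with a+b > n+1 are zero), R⁻_{ik}(X, S⁺) = ε · M_I^J(X) · D_{k'+i'}(S⁺), where M_I^J(X) is the minor of X with rows I = {i,…,n} and columns J = {k−i'+1,…,k}, and k' = n−k+1. -/
open Matrix

/-!
The rows of `S⁺` that enter `R⁻_{ik}(X, S⁺)` are `k' + i', …, n`, and in columns `> k - i'` their
entries lie below the anti-diagonal, so the `k × k` matrix has a zero `(k - i') × i'` block in its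
lower right corner. Rotating its columns cyclically by `k - i'` makes it block upper triangular with
diagonal blocks `M_I^J(X)` and `D_{k'+i'}(S⁺)`; the rotation has sign `(-1)^(i' (k - i'))`.
-/

theorem val_finRotate_pow_apply {m : ℕ} (q : ℕ) (c : Fin m) :
    ((finRotate m ^ q) c : ℕ) = (c + q) % m := by
  induction q with
  | zero => simp [Nat.mod_eq_of_lt c.isLt]
  | succ q ih =>
    have : NeZero m := c.neZero
    rw [pow_succ', Equiv.Perm.mul_apply, finRotate_apply, Fin.val_add, ih, Fin.val_one',
      Nat.add_mod_mod, Nat.mod_add_mod, add_assoc]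

theorem sign_finRotate_pow (p q : ℕ) :
    Equiv.Perm.sign (finRotate (p + q) ^ q) = (-1) ^ (p * q) := by
  rw [map_pow, sign_finRotate, ← pow_mul]
  obtain _ | q := q
  · simp
  · have hsplit : (p + (q + 1) - 1) * (q + 1) = p * (q + 1) + q * (q + 1) := by
      rw [← add_assoc, Nat.add_sub_cancel, add_mul]
    rw [hsplit, pow_add, (Nat.even_mul_succ_self q).neg_one_pow, mul_one]

theorem Matrix.det_of_lowerRight_eq_zero {R : Type*} [CommRing R] (p q : ℕ) (f : ℕ → ℕ → R)
    (hf : ∀ r c, p ≤ r → q ≤ c → f r c = 0) :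
    (of fun r c : Fin (p + q) => f r c).det
      = (-1) ^ (p * q) * (of fun r c : Fin p => f r (q + c)).det
          * (of fun r c : Fin q => f (p + r) c).det := by
  set M : Matrix (Fin (p + q)) (Fin (p + q)) R := of fun r c => f r c
  set τ := finRotate (p + q) ^ q
  have hblocks : reindex finSumFinEquiv.symm finSumFinEquiv.symm (M.submatrix id τ)
      = fromBlocks (of fun r c : Fin p => f r (q + c)) (of fun (r : Fin p) (c : Fin q) => f r c) 0
          (of fun r c : Fin q => f (p + r) c) := by
    ext (r | r) (c | c) <;>
      simp only [reindex_apply, submatrix_apply, Equiv.symm_symm, id, finSumFinEquiv_apply_left,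
        finSumFinEquiv_apply_right, fromBlocks_apply₁₁, fromBlocks_apply₁₂, fromBlocks_apply₂₁,
        fromBlocks_apply₂₂, of_apply, M, τ, val_finRotate_pow_apply, Fin.val_castAdd,
        Fin.val_natAdd, zero_apply]
    case inl.inl => rw [Nat.mod_eq_of_lt (by omega), add_comm]
    case inr.inl => exact hf _ _ le_self_add (by rw [Nat.mod_eq_of_lt (by omega)]; omega)
    all_goals rw [add_right_comm, Nat.add_mod_left, Nat.mod_eq_of_lt (by omega)]
  have hperm : (of fun r c : Fin p => f r (q + c)).det * (of fun r c : Fin q => f (p + r) c).det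
      = Equiv.Perm.sign τ * M.det := by
    rw [← det_fromBlocks_zero₂₁, ← hblocks, det_reindex_self, det_permute']
  have hsign : (Equiv.Perm.sign τ : R) = (-1) ^ (p * q) := by
    simp [τ, sign_finRotate_pow]
  rw [mul_assoc, hperm, ← hsign, ← mul_assoc, ← Int.cast_mul, ← Units.val_mul,
    Int.units_mul_self, Units.val_one, Int.cast_one, one_mul]

theorem Matrix.det_of_fin_congr {R : Type*} [CommRing R] {m m' : ℕ} (h : m = m')
    (f : ℕ → ℕ → R) :
    (of fun r c : Fin m => f r c).det = (of fun r c : Fin m' => f r c).det := by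
  subst h; rfl

theorem UpperAnti.ent_eq_zero {R : Type*} [Zero R] {n : ℕ} {S : Matrix (Fin n) (Fin n) R}
    (hS : UpperAnti S) {a b : ℕ} (hab : n + 1 < a + b) : ent S a b = 0 := by
  unfold ent
  split_ifs
  · exact hS _ _ (by simp only; omega)
  · rfl

theorem Rminus_upperAnti_general {K : Type*} [Field K] {n : ℕ}
    (i k : ℕ) (hk : k ≤ n) (hik : n + 1 - i < k) :
    ∃ ε : K, (ε = 1 ∨ ε = -1) ∧
      ∀ X S : Matrix (Fin n) (Fin n) K, UpperAnti S →
        Rminus i k X S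
          = ε * RectMinor i (k - (n + 1 - i) + 1) (n + 1 - i) X
              * Dmin ((n + 1 - k) + (n + 1 - i)) S := by
  set p := n + 1 - i
  obtain ⟨q, rfl⟩ : ∃ q, k = p + q := ⟨k - p, by omega⟩
  refine ⟨(-1) ^ (p * q), neg_one_pow_eq_or K _, fun X S hS => ?_⟩
  rw [Rminus, det_of_lowerRight_eq_zero p q
    (fun r c => if r < p then ent X (i + r) (1 + c) else ent S (n - (p + q) + 1 + r) (1 + c))
    fun r c hr hc => by rw [if_neg (not_lt.2 hr)]; exact hS.ent_eq_zero (by omega)]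
  congr 1
  · congr 1
    rw [RectMinor]
    congr 1
    ext r c
    simp only [of_apply, if_pos r.isLt]
    congr 1
    omega
  · rw [Dmin, ← det_of_fin_congr (show q = n + 1 - (n + 1 - (p + q) + p) by omega)
      fun r c => ent S (n + 1 - (p + q) + p + r) (1 + c)]
    congr 1
    ext r c
    simp only [of_apply, if_neg (Nat.not_lt.2 le_self_add)]
    congr 1
    omega

/-- for an upper anti-triangular matrix `S⁺`, `R⁻_{ik}(X, S⁺)` factors as
`± M_I^J(X) · D_{k'+i'}(S⁺)`, where `I = {i,…,n}`, `J = {k-i'+1,…,k}`, `i' = n-i+1`,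
`k' = n-k+1`, and the sign depends only on `n, i, k`. -/
theorem Rminus_upperAnti {K : Type*} [Field K] {n : ℕ} (hn : 1 ≤ n)
    (i k : ℕ) (hi1 : 1 ≤ i) (hi2 : i ≤ n) (hk : k ≤ n) (hik : n + 1 - i < k) :
    ∃ ε : K, (ε = 1 ∨ ε = -1) ∧
      ∀ X S : Matrix (Fin n) (Fin n) K, UpperAnti S →
        Rminus i k X S
          = ε * RectMinor i (k - (n + 1 - i) + 1) (n + 1 - i) X
              * Dmin ((n + 1 - k) + (n + 1 - i)) S :=
  Rminus_upperAnti_general i k hk hik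
end

section
/- For all Z, X ∈ Mat(n,K), all g₁, g₂, g₃ ∈ UT(n), and every pair (i,k) with i' > k, one has R⁺_{ik}(g₁ Z g₂⁻¹, g₁ X g₃⁻¹) = R⁺_{ik}(Z,X). -/
open Matrix

/-! Since `g₁` is upper unitriangular, rows `i,…,n` of `g₁ Y` are obtained from rows `i,…,n` of `Y`
by the corresponding diagonal block of `g₁`; dually, the leading `p` columns of `Y g⁻¹` come from the
leading `p` columns of `Y` through the leading diagonal block of `g⁻¹`. Hence the matrix of
`R⁺_{ik}(g₁ Z g₂⁻¹, g₁ X g₃⁻¹)` is that of `R⁺_{ik}(Z, X)` multiplied on the left by a unitriangular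
matrix and on the right by a block-diagonal one with unitriangular blocks, all of determinant one. -/

open Finset

section

variable {R : Type*} [CommRing R] {n : ℕ} {u : Matrix (Fin n) (Fin n) R}

lemma IsUT.isUpperTriangular_s12 (hu : IsUT u) : u.IsUpperTriangular := fun a b h => hu.2 a b h

lemma IsUT.det_eq_one_s12 (hu : IsUT u) : u.det = 1 := by
  rw [det_of_isUpperTriangular hu.isUpperTriangular_s12]
  simp [hu.1]

lemma IsUT.inv_s12 (hu : IsUT u) : IsUT u⁻¹ := by
  have := u.invertibleOfIsUnitDet (by rw [hu.det_eq_one_s12]; exact isUnit_one)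
  have htri : u⁻¹.IsUpperTriangular := blockTriangular_inv_of_blockTriangular hu.isUpperTriangular_s12
  refine ⟨fun a => ?_, fun a b h => htri h⟩
  have hdiag := congr_fun₂ (inv_mul_of_invertible u) a a
  rwa [mul_apply, sum_eq_single a (fun b _ hba => ?_) (by simp), hu.1, mul_one,
    one_apply_eq] at hdiag
  rcases lt_or_gt_of_ne hba with h | h
  · rw [htri h, zero_mul]
  · rw [hu.2 b a h, mul_zero]

lemma IsUT.ent_eq_zero_of_lt (hu : IsUT u) {a b : ℕ} (hba : b < a) : ent u a b = 0 := by
  unfold ent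
  split_ifs
  · exact hu.2 _ _ (by simp only; omega)
  · rfl

lemma IsUT.ent_self (hu : IsUT u) {a : ℕ} (ha₁ : 1 ≤ a) (ha₂ : a ≤ n) : ent u a a = 1 := by
  rw [ent, dif_pos ⟨ha₁, ha₂, ha₁, ha₂⟩]
  exact hu.1 _

lemma ent_mul (A B : Matrix (Fin n) (Fin n) R) (a b : ℕ) :
    ent (A * B) a b = ∑ d ∈ Ico 1 (n + 1), ent A a d * ent B d b := by
  rw [sum_Ico_eq_sum_range, Nat.add_sub_cancel,
    ← Fin.sum_univ_eq_sum_range (fun d => ent A a (1 + d) * ent B (1 + d) b)]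
  unfold ent
  split_ifs
  · rw [mul_apply]
    refine sum_congr rfl fun d _ => ?_
    rw [dif_pos (by omega), dif_pos (by omega)]
    congr <;> simp
  · symm
    refine sum_eq_zero fun d _ => ?_
    split_ifs <;> first | omega | simp

def entBlock (Y : Matrix (Fin n) (Fin n) R) (a b m p : ℕ) : Matrix (Fin m) (Fin p) R :=
  Matrix.of fun r c => ent Y (a + r) (b + c)

lemma IsUT.det_entBlock (hu : IsUT u) {a m : ℕ} (ha : 1 ≤ a) (hm : m ≤ n + 1 - a) :
    (entBlock u a a m m).det = 1 := by
  have htri : (entBlock u a a m m).IsUpperTriangular := fun r c hcr =>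
    hu.ent_eq_zero_of_lt (by simp only [id] at hcr; omega)
  rw [det_of_isUpperTriangular htri]
  exact prod_eq_one fun r _ => hu.ent_self (by omega) (by omega)

lemma IsUT.entBlock_mul_left (hu : IsUT u) (Y : Matrix (Fin n) (Fin n) R) {a : ℕ} (ha : 1 ≤ a)
    (b p : ℕ) :
    entBlock (u * Y) a b (n + 1 - a) p =
      entBlock u a a (n + 1 - a) (n + 1 - a) * entBlock Y a b (n + 1 - a) p := by
  ext r c
  have hsub : Ico a (n + 1) ⊆ Ico 1 (n + 1) := Ico_subset_Ico_left ha
  rw [entBlock, of_apply, ent_mul, ← sum_subset hsub fun d hd₁ hd₂ => by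
      rw [hu.ent_eq_zero_of_lt (by simp at hd₁ hd₂; omega), zero_mul],
    sum_Ico_eq_sum_range,
    ← Fin.sum_univ_eq_sum_range (fun d => ent u (a + r) (a + d) * ent Y (a + d) (b + c))]
  rfl

lemma IsUT.entBlock_mul_right (hu : IsUT u) (Y : Matrix (Fin n) (Fin n) R) (a m : ℕ) {p : ℕ}
    (hp : p ≤ n) : entBlock (Y * u) a 1 m p = entBlock Y a 1 m p * entBlock u 1 1 p p := by
  ext r c
  have hsub : Ico 1 (1 + p) ⊆ Ico 1 (n + 1) := Ico_subset_Ico_right (by omega)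
  rw [entBlock, of_apply, ent_mul, ← sum_subset hsub fun d hd₁ hd₂ => by
      rw [hu.ent_eq_zero_of_lt (by simp at hd₁ hd₂; omega), mul_zero],
    sum_Ico_eq_sum_range, Nat.add_sub_cancel_left,
    ← Fin.sum_univ_eq_sum_range (fun d => ent Y (a + r) (1 + d) * ent u (1 + d) (1 + c))]
  rfl

lemma Rplus_eq_det_fromCols (Z X : Matrix (Fin n) (Fin n) R) {i k : ℕ} (hk : k ≤ n + 1 - i) :
    Rplus i k Z X = ((fromCols (entBlock Z i 1 (n + 1 - i) (n + 1 - i - k))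
      (entBlock X i 1 (n + 1 - i) k)).submatrix id
        ((finCongr (by omega)).trans finSumFinEquiv.symm)).det := by
  unfold Rplus
  congr 1
  ext r c
  simp only [of_apply, submatrix_apply, id, Equiv.trans_apply, finCongr_apply]
  split_ifs with hc
  · rw [show Fin.cast _ c = Fin.castAdd k ⟨c, hc⟩ from rfl, finSumFinEquiv_symm_apply_castAdd]
    rfl
  · rw [show Fin.cast _ c = Fin.natAdd (n + 1 - i - k) ⟨c - (n + 1 - i - k), by omega⟩ from
      Fin.ext (by simp; omega), finSumFinEquiv_symm_apply_natAdd]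
    simp only [fromCols_apply_inr, entBlock, of_apply]
    rw [add_comm 1]

end

lemma det_fromCols_mul_submatrix {R m p q : Type*} [CommRing R] [Fintype m] [DecidableEq m]
    [Fintype p] [DecidableEq p] [Fintype q] [DecidableEq q]
    (L : Matrix m m R) (A : Matrix m p R) (B : Matrix m q R) (U : Matrix p p R)
    (V : Matrix q q R) (e : m ≃ p ⊕ q) :
    ((fromCols (L * A * U) (L * B * V)).submatrix id e).det =
      L.det * ((fromCols A B).submatrix id e).det * U.det * V.det := by
  have hfactor : fromCols (L * A * U) (L * B * V) = L * fromCols A B * fromBlocks U 0 0 V := by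
    rw [Matrix.mul_assoc L (fromCols A B), fromCols_mul_fromBlocks]
    simp [mul_fromCols, Matrix.mul_assoc]
  rw [hfactor, submatrix_mul _ _ id e e e.bijective,
    submatrix_mul _ _ id id e Function.bijective_id, det_mul, det_mul, submatrix_id_id,
    det_submatrix_equiv_self, det_fromBlocks_zero₁₂]
  ring

theorem Rplus_unitriangular_invariant_general {K : Type*} [Field K] {n : ℕ}
    (Z X g₁ g₂ g₃ : Matrix (Fin n) (Fin n) K)
    (h₁ : IsUT g₁) (h₂ : IsUT g₂) (h₃ : IsUT g₃)
    (i k : ℕ) (hi1 : 1 ≤ i) (hik : k < n + 1 - i) :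
    Rplus i k (g₁ * Z * g₂⁻¹) (g₁ * X * g₃⁻¹) = Rplus i k Z X := by
  rw [Rplus_eq_det_fromCols _ _ hik.le, Rplus_eq_det_fromCols _ _ hik.le,
    h₂.inv_s12.entBlock_mul_right _ _ _ (by omega), h₃.inv_s12.entBlock_mul_right _ _ _ (by omega),
    h₁.entBlock_mul_left _ hi1, h₁.entBlock_mul_left _ hi1, det_fromCols_mul_submatrix,
    h₁.det_entBlock hi1 le_rfl, h₂.inv_s12.det_entBlock le_rfl (by omega),
    h₃.inv_s12.det_entBlock le_rfl (by omega)]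
  ring

/-- the polynomials `R⁺_{ik}` are `U`-invariants:
`R⁺_{ik}(g₁ Z g₂⁻¹, g₁ X g₃⁻¹) = R⁺_{ik}(Z, X)` for unitriangular `g₁, g₂, g₃`
and every pair `(i,k)` with `i' = n - i + 1 > k`. -/
theorem Rplus_unitriangular_invariant {K : Type*} [Field K] {n : ℕ} (hn : 1 ≤ n)
    (Z X g₁ g₂ g₃ : Matrix (Fin n) (Fin n) K)
    (h₁ : IsUT g₁) (h₂ : IsUT g₂) (h₃ : IsUT g₃)
    (i k : ℕ) (hi1 : 1 ≤ i) (hi2 : i ≤ n) (hk1 : 1 ≤ k) (hik : k < n + 1 - i) :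
    Rplus i k (g₁ * Z * g₂⁻¹) (g₁ * X * g₃⁻¹) = Rplus i k Z X :=
  Rplus_unitriangular_invariant_general Z X g₁ g₂ g₃ h₁ h₂ h₃ i k hi1 hik
end

section
/- Fix (i,k) with i' > k and regard R⁺_{ik}(Z,X) as a polynomial in the 2n² variables z_{ab}, x_{ab}. Then R⁺_{ik}(Z,X) = f₀·x_{ik} + f₁, where f₀ and f₁ are polynomials involving only the variables z_{ab} and the variables x_{ab} with (a,b) ≺ (i,k), and f₀ is a nonzero polynomial. (Order on pairs: (a,b) ≺ (i,k) iff b < k, or b = k and a > i.) -/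
open Matrix

/-!
Write `M` for the matrix defining `R⁺_{ik}` evaluated at the generic matrices: its entries are
pairwise distinct variables, and `x_{ik}` sits in its first row and last column. Splitting that
column as `x_{ik} e₁ + (rest)` and using multilinearity of the determinant gives
`det M = f₀ x_{ik} + f₁` with `f₀, f₁` determinants of matrices whose entries are `0`, `1` or the
remaining entries of `M`, each of which is a `z`-variable or an `x_{ab}` with `(a,b) ≺ (i,k)`. The cofactor `f₀` is nonzero: specialising
the variables turns its matrix into a permutation matrix.
-/

namespace Matrix

variable {n R : Type*} [Fintype n] [DecidableEq n] [CommRing R]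

theorem det_mem_of_forall_mem {S : Type*} [SetLike S R] [SubringClass S R] {s : S}
    {A : Matrix n n R} (h : ∀ i j, A i j ∈ s) : A.det ∈ s := by
  rw [det_apply]
  exact sum_mem fun σ _ => zsmul_mem (prod_mem fun c _ => h _ _) _

theorem det_updateCol_mem {S : Type*} [SetLike S R] [SubringClass S R] {s : S}
    {A : Matrix n n R} {j : n} {u : n → R} (hA : ∀ r c, c ≠ j → A r c ∈ s) (hu : ∀ r, u r ∈ s) :
    (A.updateCol j u).det ∈ s :=
  det_mem_of_forall_mem fun r c => by
    rw [updateCol_apply]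
    split_ifs with hc
    exacts [hu r, hA r c hc]

theorem det_eq_det_updateCol_single_mul_add (A : Matrix n n R) (i j : n) :
    A.det = (A.updateCol j (Pi.single i 1)).det * A i j +
      (A.updateCol j (Function.update (fun r => A r j) i 0)).det := by
  have hcol : (fun r => A r j) = Function.update (fun r => A r j) i 0 + A i j • Pi.single i 1 := by
    ext r
    rcases eq_or_ne r i with rfl | hr <;> simp [*]
  conv_lhs => rw [← updateCol_eq_self A j, hcol]
  rw [det_updateCol_add, det_updateCol_smul]
  ring

open MvPolynomial in
theorem det_updateCol_single_X_ne_zero {σ K : Type*} [CommRing K] [Nontrivial K]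
    (v : n → n → σ) (hv : Function.Injective (Function.uncurry v)) (i j : n) :
    ((of fun r c => (X (v r c) : MvPolynomial σ K)).updateCol j (Pi.single i 1)).det ≠ 0 := by
  set P := (Equiv.swap i j).permMatrix K
  set φ : σ → K := Function.extend (Function.uncurry v) (Function.uncurry P) 0
  have hφ : (of fun r c => (X (v r c) : MvPolynomial σ K)).map (eval φ) = P := by
    ext r c
    simp only [map_apply, of_apply, eval_X, φ]
    exact hv.extend_apply (Function.uncurry P) 0 (r, c)
  have hsingle : eval φ ∘ Pi.single i (1 : MvPolynomial σ K) = Pi.single i 1 := by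
    ext r
    rcases eq_or_ne r i with rfl | hr <;> simp [*]
  have hP : P.updateCol j (Pi.single i 1) = P := by
    ext r c
    rw [updateCol_apply]
    split_ifs with hc
    · subst hc
      simp [P, PEquiv.toMatrix_apply, Pi.single_apply, Equiv.swap_apply_eq_iff]
    · rfl
  intro h
  have := congrArg (eval φ) h
  rw [RingHom.map_det, RingHom.mapMatrix_apply, map_updateCol, hφ, hsingle, hP,
    det_permutation] at this
  exact ((Equiv.Perm.sign _).isUnit.map (Int.castRingHom K)).ne_zero this

end Matrix

section Rplus

open MvPolynomial

def precedingVars (n i k : ℕ) : Set ((Fin n × Fin n) ⊕ (Fin n × Fin n)) :=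
  {v | Sum.elim (fun _ => True) (fun p : Fin n × Fin n =>
    (p.2 : ℕ) + 1 < k ∨ ((p.2 : ℕ) + 1 = k ∧ i < (p.1 : ℕ) + 1)) v}

variable (n : ℕ) {i : ℕ} (k : ℕ) (hi : 1 ≤ i)

/-- The variable at entry `(r, c)` (0-based) of the matrix defining `Rplus i k` at the generic
matrices, `Sum.inl` standing for `Z` and `Sum.inr` for `X`. -/
def rplusVar (r c : Fin (n + 1 - i)) : (Fin n × Fin n) ⊕ (Fin n × Fin n) :=
  if c.val < n + 1 - i - k then
    Sum.inl (⟨i - 1 + r, by omega⟩, ⟨c, by omega⟩)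
  else
    Sum.inr (⟨i - 1 + r, by omega⟩, ⟨c - (n + 1 - i - k), by omega⟩)

theorem rplusVar_injective : Function.Injective (Function.uncurry (rplusVar n k hi)) := by
  rintro ⟨r, c⟩ ⟨r', c'⟩ h
  simp only [Function.uncurry_apply_pair, rplusVar] at h
  simp only [Prod.mk.injEq, Fin.ext_iff]
  split_ifs at h <;> simp only [Sum.inl.injEq, Sum.inr.injEq, Prod.mk.injEq, Fin.mk.injEq] at h
    <;> omega

theorem Rplus_X_eq_det {K : Type*} [CommRing K] :
    Rplus i k (of fun a b : Fin n => (X (Sum.inl (a, b)) : MvPolynomial _ K))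
        (of fun a b : Fin n => X (Sum.inr (a, b))) =
      (of fun r c => X (rplusVar n k hi r c)).det := by
  unfold Rplus
  congr 1
  ext r c : 1
  simp only [of_apply, ent, rplusVar]
  split_ifs <;> first | omega | congr 4 <;> omega

theorem rplusVar_mem_precedingVars (hik : k < n + 1 - i) (r c : Fin (n + 1 - i))
    (h : (r : ℕ) ≠ 0 ∨ (c : ℕ) ≠ n - i) : rplusVar n k hi r c ∈ precedingVars n i k := by
  simp only [rplusVar]
  split_ifs
  · trivial
  · simp only [precedingVars, Set.mem_ofPred_eq, Sum.elim_inr]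
    omega

end Rplus

open MvPolynomial in
/-- regarded as a polynomial in the `2n²` variables `z_{ab}, x_{ab}`,
`R⁺_{ik}(Z,X) = f₀ · x_{ik} + f₁` where `f₀ ≠ 0` and `f₀, f₁` involve only the
variables `z_{ab}` and the variables `x_{ab}` with `(a,b) ≺ (i,k)`
(`(a,b) ≺ (i,k)` iff `b < k`, or `b = k` and `a > i`).
Here `z`-variables are `Sum.inl` and `x`-variables are `Sum.inr`. -/
theorem Rplus_triangular {K : Type*} [Field K] {n : ℕ}
    (i k : ℕ) (hi1 : 1 ≤ i) (hk1 : 1 ≤ k) (hik : k < n + 1 - i) :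
    ∃ f₀ f₁ : MvPolynomial ((Fin n × Fin n) ⊕ (Fin n × Fin n)) K,
      f₀ ≠ 0 ∧
      Rplus i k
          (Matrix.of fun a b : Fin n => (X (Sum.inl (a, b)) : MvPolynomial _ K))
          (Matrix.of fun a b : Fin n => (X (Sum.inr (a, b)) : MvPolynomial _ K))
        = f₀ * X (Sum.inr (⟨i - 1, by omega⟩, ⟨k - 1, by omega⟩)) + f₁ ∧
      (∀ v ∈ f₀.vars,
        Sum.elim (fun _ : Fin n × Fin n => True) (fun p : Fin n × Fin n =>
          (p.2 : ℕ) + 1 < k ∨ ((p.2 : ℕ) + 1 = k ∧ i < (p.1 : ℕ) + 1)) v) ∧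
      (∀ v ∈ f₁.vars,
        Sum.elim (fun _ : Fin n × Fin n => True) (fun p : Fin n × Fin n =>
          (p.2 : ℕ) + 1 < k ∨ ((p.2 : ℕ) + 1 = k ∧ i < (p.1 : ℕ) + 1)) v) := by
  set M := of fun r c => (X (rplusVar n k hi1 r c) : MvPolynomial _ K)
  set r₀ : Fin (n + 1 - i) := ⟨0, by omega⟩
  set t : Fin (n + 1 - i) := ⟨n - i, by omega⟩
  have hM : ∀ r c, (r ≠ r₀ ∨ c ≠ t) → M r c ∈ supported K (precedingVars n i k) :=
    fun r c h => X_mem_supported.2 <| rplusVar_mem_precedingVars n k hi1 hik r c <|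
      h.imp (fun hr h0 => hr (Fin.ext h0)) (fun hc ht => hc (Fin.ext ht))
  refine ⟨(M.updateCol t (Pi.single r₀ 1)).det,
    (M.updateCol t (Function.update (fun r => M r t) r₀ 0)).det,
    det_updateCol_single_X_ne_zero _ (rplusVar_injective n k hi1) r₀ t, ?_,
    fun v hv => mem_supported.1 (det_updateCol_mem (fun r c hc => hM r c (Or.inr hc)) ?_) hv,
    fun v hv => mem_supported.1 (det_updateCol_mem (fun r c hc => hM r c (Or.inr hc)) ?_) hv⟩
  · have hx : M r₀ t = X (Sum.inr (⟨i - 1, by omega⟩, ⟨k - 1, by omega⟩)) := by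
      simp only [M, of_apply, rplusVar, r₀, t]
      rw [if_neg (by omega)]
      congr 4; omega
    rw [Rplus_X_eq_det n k hi1, det_eq_det_updateCol_single_mul_add M r₀ t, hx]
  · intro r
    rw [Pi.single_apply]
    split_ifs
    exacts [one_mem _, zero_mem _]
  · intro r
    rw [Function.update_apply]
    split_ifs with hr
    exacts [zero_mem _, hM r t (Or.inl hr)]
end
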